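/- Fix ε > 0 and let a > 0 be sufficiently small. If (u,v) ∈ X_ε satisfies ⟨J'_ε(u,v),(φ,ψ)⟩ = 0 for all (φ,ψ) ∈ X_ε, then u ≥ 0 and v ≥ 0 almost everywhere in ℝ^N. -/

import Mathlib

open MeasureTheory Real Set Filter

noncomputable section

abbrev Euc (N : ℕ) := EuclideanSpace ℝ (Fin N)

/-- Partial derivative of a two-variable real function in the first variable. -/
def pdU (f : ℝ → ℝ → ℝ) (u v : ℝ) : ℝ := deriv (fun t => f t v) u

/-- Partial derivative of a two-variable real function in the second variable. -/
def pdV (f : ℝ → ℝ → ℝ) (u v : ℝ) : ℝ := deriv (fun t => f u t) v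

/-- Integrand of the Gagliardo seminorm. -/
def gagKer (N : ℕ) (s : ℝ) (u : Euc N → ℝ) (z : Euc N × Euc N) : ℝ :=
  (u z.1 - u z.2) ^ 2 / ‖z.1 - z.2‖ ^ ((N : ℝ) + 2 * s)

/-- Squared Gagliardo seminorm `[u]²`. -/
def gagSq (N : ℕ) (s : ℝ) (u : Euc N → ℝ) : ℝ := ∫ z, gagKer N s u z

/-- Membership in the fractional Sobolev space `H^s(ℝ^N)`. -/
def MemHs (N : ℕ) (s : ℝ) (u : Euc N → ℝ) : Prop :=
  MemLp u 2 (volume : Measure (Euc N)) ∧ Integrable (gagKer N s u)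

/-- The nonlinearity `Q` together with assumptions (Q1)-(Q6); `Q` is `C²` on the closed
first quadrant and extended by `0` outside of it.  Its partial derivatives are `pdU Q`,
`pdV Q`. -/
structure QSetup (p : ℝ) : Type where
  Q : ℝ → ℝ → ℝ
  smooth : ContDiffOn ℝ 2 (fun z : ℝ × ℝ => Q z.1 z.2) (Ici 0 ×ˢ Ici 0)
  ext_zero : ∀ u v : ℝ, u ≤ 0 ∨ v ≤ 0 → Q u v = 0
  q1 : ∀ t : ℝ, 0 < t → ∀ u v : ℝ, 0 ≤ u → 0 ≤ v → Q (t * u) (t * v) = t ^ p * Q u v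
  q2 : ∃ C : ℝ, 0 < C ∧ ∀ u v : ℝ, 0 ≤ u → 0 ≤ v →
        |pdU Q u v| + |pdV Q u v| ≤ C * (u ^ (p - 1) + v ^ (p - 1))
  q3 : pdU Q 0 1 = 0 ∧ pdV Q 1 0 = 0
  q4 : pdU Q 1 0 = 0 ∧ pdV Q 0 1 = 0
  q5 : ∀ u v : ℝ, 0 < u → 0 < v → 0 < Q u v
  q6 : ∀ u v : ℝ, 0 ≤ u → 0 ≤ v → 0 ≤ pdU Q u v ∧ 0 ≤ pdV Q u v

/-- The potentials `V`, `W`, the set `Λ`, the point `x₀` and `ρ₀`, with (H1)-(H3). -/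
structure PotSetup (N : ℕ) : Type where
  V : Euc N → ℝ
  W : Euc N → ℝ
  Λ : Set (Euc N)
  x₀ : Euc N
  ρ₀ : ℝ
  contV : Continuous V
  contW : Continuous W
  openΛ : IsOpen Λ
  bddΛ : Bornology.IsBounded Λ
  x₀mem : x₀ ∈ Λ
  ρ₀pos : 0 < ρ₀
  h1 : ∀ x ∈ frontier Λ, ρ₀ ≤ V x ∧ ρ₀ ≤ W x
  h2 : V x₀ < ρ₀ ∧ W x₀ < ρ₀
  h3 : (∀ x, V x₀ ≤ V x) ∧ (∀ x, W x₀ ≤ W x) ∧ 0 < V x₀ ∧ 0 < W x₀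

/-- `‖(u,v)‖²_ξ` for the autonomous problem with frozen potentials `V(ξ)`, `W(ξ)`. -/
def normSqXi {N : ℕ} (s : ℝ) (P : PotSetup N) (ξ : Euc N) (u v : Euc N → ℝ) : ℝ :=
  gagSq N s u + gagSq N s v + ∫ x, (P.V ξ * u x ^ 2 + P.W ξ * v x ^ 2)

/-- The autonomous energy functional `J_ξ`. -/
def Jxi {N : ℕ} (s : ℝ) {p : ℝ} (QS : QSetup p) (P : PotSetup N) (ξ : Euc N)
    (u v : Euc N → ℝ) : ℝ :=
  (1 / 2) * normSqXi s P ξ u v - ∫ x, QS.Q (u x) (v x)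

/-- The Nehari manifold `N_ξ` of the autonomous functional `J_ξ`. -/
def NehariXi {N : ℕ} (s : ℝ) {p : ℝ} (QS : QSetup p) (P : PotSetup N) (ξ : Euc N) :
    Set ((Euc N → ℝ) × (Euc N → ℝ)) :=
  {w | MemHs N s w.1 ∧ MemHs N s w.2 ∧ w ≠ (0, 0) ∧
    normSqXi s P ξ w.1 w.2 =
      ∫ x, (w.1 x * pdU QS.Q (w.1 x) (w.2 x) + w.2 x * pdV QS.Q (w.1 x) (w.2 x))}

/-- `C(ξ) = inf_{(u,v) ∈ N_ξ} J_ξ(u,v)`. -/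
def Cmin {N : ℕ} (s : ℝ) {p : ℝ} (QS : QSetup p) (P : PotSetup N) (ξ : Euc N) : ℝ :=
  sInf ((fun w : (Euc N → ℝ) × (Euc N → ℝ) => Jxi s QS P ξ w.1 w.2) '' NehariXi s QS P ξ)

/-- The cut-off function `η` used in the penalization, for a given `a > 0`. -/
structure EtaSetup (a cη : ℝ) : Type where
  η : ℝ → ℝ
  smooth : ContDiff ℝ 2 η
  anti : Antitone η
  mem01 : ∀ t, η t ∈ Icc (0 : ℝ) 1
  eq_one : ∀ t, t ≤ a → η t = 1
  eq_zero : ∀ t, 5 * a ≤ t → η t = 0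
  bd1 : ∀ t, |deriv η t| ≤ cη / a
  bd2 : ∀ t, |deriv (deriv η) t| ≤ cη / a ^ 2

/-- `A = max { Q(u,v)/(u²+v²) : a ≤ √(u²+v²) ≤ 5a }`. -/
def Aconst {p : ℝ} (QS : QSetup p) (a : ℝ) : ℝ :=
  sSup ((fun z : ℝ × ℝ => QS.Q z.1 z.2 / (z.1 ^ 2 + z.2 ^ 2)) ''
    {z : ℝ × ℝ | a ≤ Real.sqrt (z.1 ^ 2 + z.2 ^ 2) ∧ Real.sqrt (z.1 ^ 2 + z.2 ^ 2) ≤ 5 * a})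

/-- The penalized nonlinearity `Q̂`. -/
def Qhat {p : ℝ} (QS : QSetup p) (η : ℝ → ℝ) (A u v : ℝ) : ℝ :=
  η (Real.sqrt (u ^ 2 + v ^ 2)) * QS.Q u v +
    (1 - η (Real.sqrt (u ^ 2 + v ^ 2))) * (A * (u ^ 2 + v ^ 2))

/-- The penalized function `H(x,u,v) = χ_Λ(x) Q(u,v) + (1-χ_Λ(x)) Q̂(u,v)`. -/
def Hpen {N : ℕ} {p : ℝ} (QS : QSetup p) (η : ℝ → ℝ) (A : ℝ) (Λ : Set (Euc N))
    (x : Euc N) (u v : ℝ) : ℝ :=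
  Λ.indicator (fun _ => (1 : ℝ)) x * QS.Q u v +
    (1 - Λ.indicator (fun _ => (1 : ℝ)) x) * Qhat QS η A u v

/-- `H_u`. -/
def HpenU {N : ℕ} {p : ℝ} (QS : QSetup p) (η : ℝ → ℝ) (A : ℝ) (Λ : Set (Euc N))
    (x : Euc N) (u v : ℝ) : ℝ := pdU (Hpen QS η A Λ x) u v

/-- `H_v`. -/
def HpenV {N : ℕ} {p : ℝ} (QS : QSetup p) (η : ℝ → ℝ) (A : ℝ) (Λ : Set (Euc N))
    (x : Euc N) (u v : ℝ) : ℝ := pdV (Hpen QS η A Λ x) u v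

/-- `H_uu`. -/
def HpenUU {N : ℕ} {p : ℝ} (QS : QSetup p) (η : ℝ → ℝ) (A : ℝ) (Λ : Set (Euc N))
    (x : Euc N) (u v : ℝ) : ℝ := pdU (HpenU QS η A Λ x) u v

/-- `H_uv`. -/
def HpenUV {N : ℕ} {p : ℝ} (QS : QSetup p) (η : ℝ → ℝ) (A : ℝ) (Λ : Set (Euc N))
    (x : Euc N) (u v : ℝ) : ℝ := pdV (HpenU QS η A Λ x) u v

/-- `H_vv`. -/
def HpenVV {N : ℕ} {p : ℝ} (QS : QSetup p) (η : ℝ → ℝ) (A : ℝ) (Λ : Set (Euc N))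
    (x : Euc N) (u v : ℝ) : ℝ := pdV (HpenV QS η A Λ x) u v

/-- `‖(u,v)‖²_ε`. -/
def normSqE {N : ℕ} (s : ℝ) (P : PotSetup N) (ε : ℝ) (u v : Euc N → ℝ) : ℝ :=
  gagSq N s u + gagSq N s v + ∫ x, (P.V (ε • x) * u x ^ 2 + P.W (ε • x) * v x ^ 2)

/-- Membership in the space `X_ε`. -/
def MemXe {N : ℕ} (s : ℝ) (P : PotSetup N) (ε : ℝ) (u v : Euc N → ℝ) : Prop :=
  MemHs N s u ∧ MemHs N s v ∧
    Integrable (fun x => P.V (ε • x) * u x ^ 2 + P.W (ε • x) * v x ^ 2)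

/-- The penalized energy functional `J_ε`. -/
def Je {N : ℕ} (s : ℝ) {p : ℝ} (QS : QSetup p) (η : ℝ → ℝ) (A : ℝ) (P : PotSetup N)
    (ε : ℝ) (u v : Euc N → ℝ) : ℝ :=
  (1 / 2) * normSqE s P ε u v - ∫ x, Hpen QS η A P.Λ (ε • x) (u x) (v x)

/-- The pairing `⟨J'_ε(u,v),(φ,ψ)⟩`. -/
def pairJe {N : ℕ} (s : ℝ) {p : ℝ} (QS : QSetup p) (η : ℝ → ℝ) (A : ℝ) (P : PotSetup N)
    (ε : ℝ) (u v φ ψ : Euc N → ℝ) : ℝ :=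
  (∫ z : Euc N × Euc N, (u z.1 - u z.2) * (φ z.1 - φ z.2) / ‖z.1 - z.2‖ ^ ((N : ℝ) + 2 * s)) +
  (∫ z : Euc N × Euc N, (v z.1 - v z.2) * (ψ z.1 - ψ z.2) / ‖z.1 - z.2‖ ^ ((N : ℝ) + 2 * s)) +
  (∫ x, (P.V (ε • x) * u x * φ x + P.W (ε • x) * v x * ψ x)) -
  (∫ x, (φ x * HpenU QS η A P.Λ (ε • x) (u x) (v x) +
         ψ x * HpenV QS η A P.Λ (ε • x) (u x) (v x)))

/-- The Nehari manifold `N_ε` of the penalized functional `J_ε`. -/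
def NehariE {N : ℕ} (s : ℝ) {p : ℝ} (QS : QSetup p) (η : ℝ → ℝ) (A : ℝ) (P : PotSetup N)
    (ε : ℝ) : Set ((Euc N → ℝ) × (Euc N → ℝ)) :=
  {w | MemXe s P ε w.1 w.2 ∧ w ≠ (0, 0) ∧
    normSqE s P ε w.1 w.2 =
      ∫ x, (w.1 x * HpenU QS η A P.Λ (ε • x) (w.1 x) (w.2 x) +
            w.2 x * HpenV QS η A P.Λ (ε • x) (w.1 x) (w.2 x))}

end

/-!
Test the equation with `(min u 0, 0)`: `min · 0` is monotone and `1`-Lipschitz, so this test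
pair lies in `X_ε`, the Gagliardo term is nonnegative and the potential term is at least
`V(x₀) ∫ (min u 0)²`. Where `u < 0` we have `Q = 0`, so only the penalization
`(1 - η) A (u² + v²)` contributes to `H_u`, and `u H_u ≤ (5 c_η + 2) A u²`. By homogeneity of `Q`,
`A = O(a^(p-2))`, so for small `a` this constant is below `V(x₀)`, which forces
`∫ (min u 0)² = 0`. The component `v` is handled in the same way with `(0, min v 0)`.
-/

open Topology

lemma Monotone.sub_mul_sub_nonneg {T : ℝ → ℝ} (hT : Monotone T) (a b : ℝ) :
    0 ≤ (a - b) * (T a - T b) := by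
  rcases le_total a b with h | h
  · exact mul_nonneg_of_nonpos_of_nonpos (sub_nonpos.2 h) (sub_nonpos.2 (hT h))
  · exact mul_nonneg (sub_nonneg.2 h) (sub_nonneg.2 (hT h))

lemma mul_min_zero_self (a : ℝ) : a * min a 0 = min a 0 ^ 2 := by
  rcases le_total a 0 with h | h
  · rw [min_eq_left h]; ring
  · rw [min_eq_right h]; ring

lemma ae_nonneg_of_min_zero_test {α : Type*} [MeasurableSpace α] {μ : Measure α}
    {w Vf Hf : α → ℝ} {G K ρ : ℝ} (hG : 0 ≤ G) (hK : 0 ≤ K) (hKρ : K < ρ)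
    (hVf : ∀ x, ρ ≤ Vf x) (hH : ∀ x, min (w x) 0 * Hf x ≤ K * min (w x) 0 ^ 2)
    (hw2 : Integrable (fun x => min (w x) 0 ^ 2) μ)
    (hVw : Integrable (fun x => Vf x * min (w x) 0 ^ 2) μ)
    (heq : G + ∫ x, Vf x * w x * min (w x) 0 ∂μ - ∫ x, min (w x) 0 * Hf x ∂μ = 0) :
    ∀ᵐ x ∂μ, 0 ≤ w x := by
  have hV : ρ * ∫ x, min (w x) 0 ^ 2 ∂μ ≤ ∫ x, Vf x * w x * min (w x) 0 ∂μ := by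
    simp_rw [mul_assoc, mul_min_zero_self, ← integral_const_mul]
    exact integral_mono (hw2.const_mul ρ) hVw
      fun x => mul_le_mul_of_nonneg_right (hVf x) (sq_nonneg _)
  have hHK : ∫ x, min (w x) 0 * Hf x ∂μ ≤ K * ∫ x, min (w x) 0 ^ 2 ∂μ := by
    by_cases hint : Integrable (fun x => min (w x) 0 * Hf x) μ
    · rw [← integral_const_mul]
      exact integral_mono hint (hw2.const_mul K) hH
    · rw [integral_undef hint]
      exact mul_nonneg hK (integral_nonneg fun x => sq_nonneg _)
  have hI : ∫ x, min (w x) 0 ^ 2 ∂μ = 0 :=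
    le_antisymm (by nlinarith) (integral_nonneg fun x => sq_nonneg _)
  filter_upwards [(integral_eq_zero_iff_of_nonneg (fun x => sq_nonneg _) hw2).1 hI] with x hx
  simpa using hx

lemma LipschitzWith.sq_sub_le {T : ℝ → ℝ} {K : NNReal} (hT : LipschitzWith K T) (a b : ℝ) :
    (T a - T b) ^ 2 ≤ K ^ 2 * (a - b) ^ 2 := by
  have h := hT.dist_le_mul a b
  rw [Real.dist_eq, Real.dist_eq] at h
  calc (T a - T b) ^ 2 = |T a - T b| ^ 2 := (sq_abs _).symm
    _ ≤ (K * |a - b|) ^ 2 := pow_le_pow_left₀ (abs_nonneg _) h 2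
    _ = K ^ 2 * (a - b) ^ 2 := by rw [mul_pow, sq_abs]

section FractionalSobolev

variable {N : ℕ} {s : ℝ}

lemma aestronglyMeasurable_gagKer {u : Euc N → ℝ} (hu : AEStronglyMeasurable u volume) :
    AEStronglyMeasurable (gagKer N s u) volume := by
  rw [Measure.volume_eq_prod]
  have hdiff : AEStronglyMeasurable (fun z : Euc N × Euc N => u z.1 - u z.2)
      (volume.prod volume) := hu.comp_fst.sub hu.comp_snd
  exact ((hdiff.aemeasurable.pow_const 2).div
    ((measurable_fst.sub measurable_snd).norm.pow_const _).aemeasurable).aestronglyMeasurable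

lemma gagKer_comp_le {T : ℝ → ℝ} {K : NNReal} (hT : LipschitzWith K T) (u : Euc N → ℝ)
    (z : Euc N × Euc N) : gagKer N s (T ∘ u) z ≤ K ^ 2 * gagKer N s u z := by
  have hsq := hT.sq_sub_le (u z.1) (u z.2)
  simp only [gagKer, Function.comp_apply, mul_div_assoc']
  gcongr

lemma MemHs.comp_lipschitz {u : Euc N → ℝ} (hu : MemHs N s u) {T : ℝ → ℝ} {K : NNReal}
    (hT : LipschitzWith K T) (hT0 : T 0 = 0) : MemHs N s (T ∘ u) := by
  refine ⟨hT.comp_memLp hT0 hu.1, (hu.2.const_mul (K ^ 2)).mono'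
    (aestronglyMeasurable_gagKer (hT.continuous.comp_aestronglyMeasurable
      hu.1.aestronglyMeasurable)) (Eventually.of_forall fun z => ?_)⟩
  have hnonneg : 0 ≤ gagKer N s (T ∘ u) z := by unfold gagKer; positivity
  rw [Real.norm_eq_abs, abs_of_nonneg hnonneg]
  exact gagKer_comp_le hT u z

end FractionalSobolev

namespace PotSetup

variable {N : ℕ} (P : PotSetup N)

lemma V_nonneg (x : Euc N) : 0 ≤ P.V x := P.h3.2.2.1.le.trans (P.h3.1 x)

lemma W_nonneg (x : Euc N) : 0 ≤ P.W x := P.h3.2.2.2.le.trans (P.h3.2.1 x)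

end PotSetup

lemma MemXe.comp_lipschitz {N : ℕ} {s ε : ℝ} {P : PotSetup N} {u v : Euc N → ℝ}
    (huv : MemXe s P ε u v) {T S : ℝ → ℝ} {K : NNReal} (hT : LipschitzWith K T) (hT0 : T 0 = 0)
    (hS : LipschitzWith K S) (hS0 : S 0 = 0) : MemXe s P ε (T ∘ u) (S ∘ v) := by
  obtain ⟨hu, hv, hint⟩ := huv
  have hTu := hT.comp_memLp hT0 hu.1
  have hSv := hS.comp_memLp hS0 hv.1
  have hsq : ∀ {R : ℝ → ℝ}, LipschitzWith K R → R 0 = 0 → ∀ a, R a ^ 2 ≤ K ^ 2 * a ^ 2 :=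
    fun hR hR0 a => by simpa [hR0] using hR.sq_sub_le a 0
  refine ⟨hu.comp_lipschitz hT hT0, hv.comp_lipschitz hS hS0,
    (hint.const_mul (K ^ 2)).mono' ?_ (Eventually.of_forall fun x => ?_)⟩
  · exact ((P.contV.comp (continuous_const_smul ε)).aestronglyMeasurable.mul
      (hTu.aestronglyMeasurable.pow 2)).add
      ((P.contW.comp (continuous_const_smul ε)).aestronglyMeasurable.mul
      (hSv.aestronglyMeasurable.pow 2))
  · have hV := P.V_nonneg (ε • x)
    have hW := P.W_nonneg (ε • x)
    simp only [Function.comp_apply]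
    rw [Real.norm_eq_abs, abs_of_nonneg (by positivity)]
    nlinarith [mul_le_mul_of_nonneg_left (hsq hT hT0 (u x)) hV,
      mul_le_mul_of_nonneg_left (hsq hS hS0 (v x)) hW]

namespace QSetup

variable {p : ℝ} (QS : QSetup p)

lemma Q_nonneg (u v : ℝ) : 0 ≤ QS.Q u v := by
  rcases le_or_gt u 0 with hu | hu
  · rw [QS.ext_zero u v (Or.inl hu)]
  rcases le_or_gt v 0 with hv | hv
  · rw [QS.ext_zero u v (Or.inr hv)]
  exact (QS.q5 u v hu hv).le

lemma exists_Q_le_mul_rpow : ∃ M, 0 ≤ M ∧ ∀ u v, QS.Q u v ≤ M * √(u ^ 2 + v ^ 2) ^ p := by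
  obtain ⟨M, hM⟩ := (isCompact_Icc.prod isCompact_Icc :
      IsCompact (Icc (0 : ℝ) 1 ×ˢ Icc (0 : ℝ) 1)).exists_bound_of_continuousOn
    (QS.smooth.continuousOn.mono fun z hz => ⟨hz.1.1, hz.2.1⟩)
  have hM0 : 0 ≤ M := (norm_nonneg _).trans (hM (0, 0) (by simp))
  refine ⟨M, hM0, fun u v => ?_⟩
  rcases le_or_gt u 0 with hu | hu
  · rw [QS.ext_zero u v (Or.inl hu)]; positivity
  rcases le_or_gt v 0 with hv | hv
  · rw [QS.ext_zero u v (Or.inr hv)]; positivity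
  set r := √(u ^ 2 + v ^ 2)
  have hr : 0 < r := Real.sqrt_pos.2 (by positivity)
  have hur : u ≤ r := Real.le_sqrt_of_sq_le (by nlinarith)
  have hvr : v ≤ r := Real.le_sqrt_of_sq_le (by nlinarith)
  have hQ : QS.Q u v = r ^ p * QS.Q (u / r) (v / r) := by
    rw [← QS.q1 r hr _ _ (by positivity) (by positivity), mul_div_cancel₀ _ hr.ne',
      mul_div_cancel₀ _ hr.ne']
  have hunit : (u / r, v / r) ∈ Icc (0 : ℝ) 1 ×ˢ Icc (0 : ℝ) 1 :=
    ⟨⟨by positivity, (div_le_one hr).2 hur⟩, ⟨by positivity, (div_le_one hr).2 hvr⟩⟩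
  rw [hQ, mul_comm M]
  exact mul_le_mul_of_nonneg_left (le_of_abs_le (hM _ hunit)) (by positivity)

end QSetup

lemma Aconst_nonneg {p : ℝ} (QS : QSetup p) (a : ℝ) : 0 ≤ Aconst QS a :=
  Real.sSup_nonneg <| by
    rintro _ ⟨z, _, rfl⟩
    exact div_nonneg (QS.Q_nonneg _ _) (by positivity)

lemma tendsto_Aconst_nhdsGT_zero {p : ℝ} (QS : QSetup p) (hp : 2 < p) :
    Tendsto (Aconst QS) (𝓝[>] 0) (𝓝 0) := by
  obtain ⟨M, hM0, hM⟩ := QS.exists_Q_le_mul_rpow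
  have hbound : ∀ a, 0 < a → Aconst QS a ≤ M * (5 * a) ^ (p - 2) := by
    refine fun a ha => Real.sSup_le ?_ (by positivity)
    rintro _ ⟨z, ⟨haz, hz5a⟩, rfl⟩
    have hr : 0 < √(z.1 ^ 2 + z.2 ^ 2) := ha.trans_le haz
    have hsq : z.1 ^ 2 + z.2 ^ 2 = √(z.1 ^ 2 + z.2 ^ 2) ^ (2 : ℝ) := by
      rw [Real.rpow_two, Real.sq_sqrt (by positivity)]
    calc QS.Q z.1 z.2 / (z.1 ^ 2 + z.2 ^ 2)
        ≤ M * √(z.1 ^ 2 + z.2 ^ 2) ^ p / √(z.1 ^ 2 + z.2 ^ 2) ^ (2 : ℝ) := by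
          rw [← hsq]; exact div_le_div_of_nonneg_right (hM _ _) (by positivity)
      _ = M * √(z.1 ^ 2 + z.2 ^ 2) ^ (p - 2) := by rw [mul_div_assoc, Real.rpow_sub hr]
      _ ≤ M * (5 * a) ^ (p - 2) := by gcongr
  have hlim : Tendsto (fun a : ℝ => M * (5 * a) ^ (p - 2)) (𝓝[>] 0) (𝓝 0) := by
    have hcont : ContinuousAt (fun a : ℝ => M * (5 * a) ^ (p - 2)) 0 :=
      continuousAt_const.mul ((Real.continuousAt_rpow_const _ _ (Or.inr (by linarith))).comp
        (continuousAt_const.mul continuousAt_id))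
    simpa [Real.zero_rpow (by linarith : p - 2 ≠ 0)] using
      hcont.tendsto.mono_left nhdsWithin_le_nhds
  exact tendsto_of_tendsto_of_tendsto_of_le_of_le' tendsto_const_nhds hlim
    (Eventually.of_forall (Aconst_nonneg QS)) (eventually_mem_nhdsWithin.mono hbound)

namespace EtaSetup

lemma cη_nonneg {a cη : ℝ} (E : EtaSetup a cη) (ha : 0 < a) : 0 ≤ cη := by
  simpa [ha.ne'] using mul_nonneg ((abs_nonneg _).trans (E.bd1 0)) ha.le

variable {a cη : ℝ} (E : EtaSetup a cη)

lemma deriv_eq_zero_of_lt {t : ℝ} (ht : 5 * a < t) : deriv E.η t = 0 := by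
  rw [(eventuallyEq_of_mem (Ioi_mem_nhds ht) fun r hr => E.eq_zero r (le_of_lt hr)).deriv_eq,
    deriv_const]

lemma neg_deriv_mul_le (ha : 0 < a) {r : ℝ} (hr : 0 ≤ r) : -deriv E.η r * r ≤ 5 * cη := by
  rcases le_or_gt r (5 * a) with h | h
  · calc -deriv E.η r * r ≤ cη / a * (5 * a) :=
          mul_le_mul ((neg_le_abs _).trans (E.bd1 r)) h hr (div_nonneg (E.cη_nonneg ha) ha.le)
      _ = 5 * cη := by field_simp
  · simp [E.deriv_eq_zero_of_lt h, E.cη_nonneg ha]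

lemma mul_deriv_penalty_le (ha : 0 < a) {A : ℝ} (hA : 0 ≤ A) (c : ℝ) {w : ℝ} (hw : w < 0) :
    w * deriv (fun t => (1 - E.η √(t ^ 2 + c ^ 2)) * (A * (t ^ 2 + c ^ 2))) w ≤
      (5 * cη + 2) * A * w ^ 2 := by
  have hq : 0 < w ^ 2 + c ^ 2 := by have := hw.ne; positivity
  set r := √(w ^ 2 + c ^ 2)
  have hr : 0 < r := Real.sqrt_pos.2 hq
  have hrsq : w ^ 2 + c ^ 2 = r ^ 2 := (Real.sq_sqrt hq.le).symm
  have hsq : HasDerivAt (fun t : ℝ => t ^ 2 + c ^ 2) (2 * w) w := by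
    simpa using (hasDerivAt_pow 2 w).add_const (c ^ 2)
  have hη := ((E.smooth.differentiable (by norm_num)) r).hasDerivAt.comp w (hsq.sqrt hq.ne')
  have hpen : HasDerivAt (fun t => (1 - E.η √(t ^ 2 + c ^ 2)) * (A * (t ^ 2 + c ^ 2)))
      (-(deriv E.η r * (2 * w / (2 * r))) * (A * (w ^ 2 + c ^ 2)) +
        (1 - E.η r) * (A * (2 * w))) w :=
    (hη.const_sub 1).mul (hsq.const_mul A)
  rw [hpen.deriv]
  have hsplit : w * (-(deriv E.η r * (2 * w / (2 * r))) * (A * (w ^ 2 + c ^ 2)) +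
      (1 - E.η r) * (A * (2 * w))) =
      A * w ^ 2 * (-deriv E.η r * r) + 2 * A * w ^ 2 * (1 - E.η r) := by
    rw [hrsq]; field_simp
  rw [hsplit]
  have hAw : 0 ≤ A * w ^ 2 := by positivity
  nlinarith [mul_le_mul_of_nonneg_left (E.neg_deriv_mul_le ha hr.le) hAw, (E.mem01 r).1]

end EtaSetup

section Penalization

variable {N : ℕ} {p : ℝ} (QS : QSetup p) {a cη A : ℝ} (E : EtaSetup a cη) (Λ : Set (Euc N))
  (x : Euc N) {u v : ℝ}

lemma Hpen_of_nonpos (η : ℝ → ℝ) (h : u ≤ 0 ∨ v ≤ 0) :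
    Hpen QS η A Λ x u v =
      (1 - Λ.indicator (fun _ => (1 : ℝ)) x) *
        ((1 - η √(u ^ 2 + v ^ 2)) * (A * (u ^ 2 + v ^ 2))) := by
  simp [Hpen, Qhat, QS.ext_zero u v h]

lemma one_sub_indicator_mul_le {y b : ℝ} (hy : y ≤ b) (hb : 0 ≤ b) :
    (1 - Λ.indicator (fun _ => (1 : ℝ)) x) * y ≤ b := by
  by_cases hx : x ∈ Λ <;> simp [hx, hy, hb]

lemma mul_HpenU_le (ha : 0 < a) (hA : 0 ≤ A) (hu : u < 0) :
    u * HpenU QS E.η A Λ x u v ≤ (5 * cη + 2) * A * u ^ 2 := by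
  have hev : (fun t => Hpen QS E.η A Λ x t v) =ᶠ[𝓝 u] fun t =>
      (1 - Λ.indicator (fun _ => (1 : ℝ)) x) *
        ((1 - E.η √(t ^ 2 + v ^ 2)) * (A * (t ^ 2 + v ^ 2))) :=
    eventuallyEq_of_mem (Iio_mem_nhds hu) fun t ht => Hpen_of_nonpos QS Λ x E.η (Or.inl ht.le)
  rw [HpenU, pdU, hev.deriv_eq, deriv_const_mul_field', mul_left_comm]
  have hK : 0 ≤ (5 * cη + 2) * A * u ^ 2 := by have := E.cη_nonneg ha; positivity
  exact one_sub_indicator_mul_le Λ x (E.mul_deriv_penalty_le ha hA v hu) hK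

lemma mul_HpenV_le (ha : 0 < a) (hA : 0 ≤ A) (hv : v < 0) :
    v * HpenV QS E.η A Λ x u v ≤ (5 * cη + 2) * A * v ^ 2 := by
  have hev : (fun t => Hpen QS E.η A Λ x u t) =ᶠ[𝓝 v] fun t =>
      (1 - Λ.indicator (fun _ => (1 : ℝ)) x) *
        ((1 - E.η √(t ^ 2 + u ^ 2)) * (A * (t ^ 2 + u ^ 2))) :=
    eventuallyEq_of_mem (Iio_mem_nhds hv) fun t ht => by
      rw [Hpen_of_nonpos QS Λ x E.η (Or.inr ht.le), add_comm (u ^ 2)]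
  rw [HpenV, pdV, hev.deriv_eq, deriv_const_mul_field', mul_left_comm]
  have hK : 0 ≤ (5 * cη + 2) * A * v ^ 2 := by have := E.cη_nonneg ha; positivity
  exact one_sub_indicator_mul_le Λ x (E.mul_deriv_penalty_le ha hA u hv) hK

end Penalization

section CriticalPoints

variable {N : ℕ} {s p ε a cη : ℝ} {QS : QSetup p} {P : PotSetup N} {u v : Euc N → ℝ}

lemma integral_mul_min_zero_div_nonneg (w : Euc N → ℝ) (r : ℝ) :
    0 ≤ ∫ z : Euc N × Euc N,
      (w z.1 - w z.2) * (min (w z.1) 0 - min (w z.2) 0) / ‖z.1 - z.2‖ ^ r :=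
  integral_nonneg fun z => div_nonneg
    ((monotone_id.min monotone_const).sub_mul_sub_nonneg (w z.1) (w z.2)) (by positivity)

lemma ae_nonneg_fst_of_pairJe_eq_zero (ha : 0 < a) (E : EtaSetup a cη)
    (hsmall : (5 * cη + 2) * Aconst QS a < P.V P.x₀) (huv : MemXe s P ε u v)
    (hpair : ∀ φ ψ, MemXe s P ε φ ψ → pairJe s QS E.η (Aconst QS a) P ε u v φ ψ = 0) :
    ∀ᵐ x, 0 ≤ u x := by
  have htest : MemXe s P ε (fun x => min (u x) 0) (fun _ => 0) :=
    huv.comp_lipschitz (LipschitzWith.id.min_const 0) (min_self 0) (LipschitzWith.const' 0) rfl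
  have h0 := hpair _ _ htest
  simp only [pairJe, sub_self, mul_zero, zero_mul, zero_div, integral_zero, add_zero] at h0
  refine ae_nonneg_of_min_zero_test (integral_mul_min_zero_div_nonneg u _)
    (mul_nonneg (by linarith [E.cη_nonneg ha]) (Aconst_nonneg QS a)) hsmall
    (fun x => P.h3.1 (ε • x)) (fun x => ?_) htest.1.1.integrable_sq (by simpa using htest.2.2) h0
  rcases lt_or_ge (u x) 0 with hu | hu
  · rw [min_eq_left hu.le]
    exact mul_HpenU_le QS E P.Λ (ε • x) ha (Aconst_nonneg QS a) hu
  · simp [min_eq_right hu]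

lemma ae_nonneg_snd_of_pairJe_eq_zero (ha : 0 < a) (E : EtaSetup a cη)
    (hsmall : (5 * cη + 2) * Aconst QS a < P.W P.x₀) (huv : MemXe s P ε u v)
    (hpair : ∀ φ ψ, MemXe s P ε φ ψ → pairJe s QS E.η (Aconst QS a) P ε u v φ ψ = 0) :
    ∀ᵐ x, 0 ≤ v x := by
  have htest : MemXe s P ε (fun _ => 0) (fun x => min (v x) 0) :=
    huv.comp_lipschitz (LipschitzWith.const' 0) rfl (LipschitzWith.id.min_const 0) (min_self 0)
  have h0 := hpair _ _ htest
  simp only [pairJe, sub_self, mul_zero, zero_mul, zero_div, integral_zero, zero_add] at h0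
  refine ae_nonneg_of_min_zero_test (integral_mul_min_zero_div_nonneg v _)
    (mul_nonneg (by linarith [E.cη_nonneg ha]) (Aconst_nonneg QS a)) hsmall
    (fun x => P.h3.2.1 (ε • x)) (fun x => ?_) htest.2.1.1.integrable_sq
    (by simpa using htest.2.2) h0
  rcases lt_or_ge (v x) 0 with hv | hv
  · rw [min_eq_left hv.le]
    exact mul_HpenV_le QS E P.Λ (ε • x) ha (Aconst_nonneg QS a) hv
  · simp [min_eq_right hv]

end CriticalPoints

theorem stmt12_general {N : ℕ} (s p : ℝ)
    (hp : 2 < p ∧ p < 2 * (N : ℝ) / ((N : ℝ) - 2 * s))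
    (QS : QSetup p) (P : PotSetup N) (cη : ℝ) :
    ∀ ε : ℝ, 0 < ε → ∃ a₀ > 0, ∀ a : ℝ, 0 < a → a < a₀ → ∀ E : EtaSetup a cη,
      ∀ u v : Euc N → ℝ, MemXe s P ε u v →
      (∀ φ ψ : Euc N → ℝ, MemXe s P ε φ ψ →
        pairJe s QS E.η (Aconst QS a) P ε u v φ ψ = 0) →
      (∀ᵐ x : Euc N, 0 ≤ u x) ∧ (∀ᵐ x : Euc N, 0 ≤ v x) := by
  intro ε _
  have hsmall : ∀ᶠ a in 𝓝[>] 0, (5 * cη + 2) * Aconst QS a < min (P.V P.x₀) (P.W P.x₀) := by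
    have hlim := (tendsto_Aconst_nhdsGT_zero QS hp.1).const_mul (5 * cη + 2)
    rw [mul_zero] at hlim
    exact hlim.eventually (gt_mem_nhds (lt_min P.h3.2.2.1 P.h3.2.2.2))
  obtain ⟨a₀, ha₀, hsub⟩ := mem_nhdsGT_iff_exists_Ioo_subset.1 hsmall
  refine ⟨a₀, ha₀, fun a ha haa₀ E u v huv hpair => ?_⟩
  have hK : (5 * cη + 2) * Aconst QS a < min (P.V P.x₀) (P.W P.x₀) := hsub ⟨ha, haa₀⟩
  exact ⟨ae_nonneg_fst_of_pairJe_eq_zero ha E (hK.trans_le (min_le_left _ _)) huv hpair,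
    ae_nonneg_snd_of_pairJe_eq_zero ha E (hK.trans_le (min_le_right _ _)) huv hpair⟩

/-- critical points of `J_ε` have nonnegative components. -/
theorem stmt12 {N : ℕ} (s p : ℝ) (hs : 0 < s ∧ s < 1) (hN : 2 * s < (N : ℝ))
    (hp : 2 < p ∧ p < 2 * (N : ℝ) / ((N : ℝ) - 2 * s))
    (QS : QSetup p) (P : PotSetup N) (cη : ℝ) (hcη : 0 < cη) :
    ∀ ε : ℝ, 0 < ε → ∃ a₀ > 0, ∀ a : ℝ, 0 < a → a < a₀ → ∀ E : EtaSetup a cη,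
      ∀ u v : Euc N → ℝ, MemXe s P ε u v →
      (∀ φ ψ : Euc N → ℝ, MemXe s P ε φ ψ →
        pairJe s QS E.η (Aconst QS a) P ε u v φ ψ = 0) →
      (∀ᵐ x : Euc N, 0 ≤ u x) ∧ (∀ᵐ x : Euc N, 0 ≤ v x) :=
  stmt12_general s p hp QS P cη
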